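/- Symmetry invariance of the pseudo-inverse of the cell diffusion operator: let L(ρ) = −div_y(D(y)∇_yρ) + ∇_y·(U(y)ρ) on the torus with D even (D(−y) = D(y)) and U odd (U(−y) = −U(y)). Then the unique normalized kernel element ρ of L is even in y, and L⁻¹ (defined on mean-zero functions, producing mean-zero solutions) maps even functions to even functions and odd functions to odd functions; the same holds for L*⁻¹. -/

import Mathlib

open MeasureTheory

variable {d : ℕ}

/-- Periodicity with respect to the unit lattice `ℤ^d`. -/
def PerFn (f : (Fin d → ℝ) → ℝ) : Prop :=
  ∀ (y : Fin d → ℝ) (n : Fin d → ℤ), f (y + fun i => (n i : ℝ)) = f y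

/-- The cell operator `L(ρ) = -div_y(D ∇_y ρ) + ∇_y·(U ρ)`. -/
noncomputable def Lcell (D : (Fin d → ℝ) → Matrix (Fin d) (Fin d) ℝ)
    (U : (Fin d → ℝ) → (Fin d → ℝ)) (ρ : (Fin d → ℝ) → ℝ) : (Fin d → ℝ) → ℝ :=
  fun y =>
    -(∑ i, fderiv ℝ (fun y' => ∑ j, D y' i j * fderiv ℝ ρ y' (Pi.single j 1)) y
        (Pi.single i 1))
    + ∑ i, fderiv ℝ (fun y' => U y' i * ρ y') y (Pi.single i 1)

/-- The formal adjoint `L*(n) = -div_y(Dᵀ ∇_y n) - U·∇_y n`. -/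
noncomputable def Lcellstar (D : (Fin d → ℝ) → Matrix (Fin d) (Fin d) ℝ)
    (U : (Fin d → ℝ) → (Fin d → ℝ)) (n : (Fin d → ℝ) → ℝ) : (Fin d → ℝ) → ℝ :=
  fun y =>
    -(∑ i, fderiv ℝ (fun y' => ∑ j, D y' j i * fderiv ℝ n y' (Pi.single j 1)) y
        (Pi.single i 1))
    - ∑ i, U y i * fderiv ℝ n y (Pi.single i 1)

/-- Mean over the periodicity cell. -/
noncomputable def cellMean (f : (Fin d → ℝ) → ℝ) : ℝ :=
  ∫ y in Set.Icc (0 : Fin d → ℝ) 1, f y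


section ParityHelpers

lemma fderiv_comp_neg_apply' {E : Type*} [NormedAddCommGroup E] [NormedSpace ℝ E]
    (f : E → ℝ) (x v : E) (hf : DifferentiableAt ℝ f (-x)) :
    fderiv ℝ (fun y => f (-y)) x v = -(fderiv ℝ f (-x) v) := by
  have hneg : HasFDerivAt (fun y : E => -y) (-(ContinuousLinearMap.id ℝ E)) x :=
    (hasFDerivAt_id x).neg
  have h : HasFDerivAt (fun y => f (-y))
      ((fderiv ℝ f (-x)).comp (-(ContinuousLinearMap.id ℝ E))) x :=
    hf.hasFDerivAt.comp x hneg
  rw [h.fderiv]; simp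

lemma fderiv_neg_comp_neg_apply' {E : Type*} [NormedAddCommGroup E] [NormedSpace ℝ E]
    (g : E → ℝ) (x v : E) (hg : DifferentiableAt ℝ g (-x)) :
    fderiv ℝ (fun y => -(g (-y))) x v = fderiv ℝ g (-x) v := by
  have h1 : fderiv ℝ (fun y => -(g (-y))) x = -(fderiv ℝ (fun y => g (-y)) x) := fderiv_neg
  rw [h1, ContinuousLinearMap.neg_apply, fderiv_comp_neg_apply' g x v hg, neg_neg]

lemma perfn_shift {f : (Fin d → ℝ) → ℝ} (hf : PerFn f) (y : Fin d → ℝ) :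
    f (y + (-1)) = f y := by
  have h := hf (y + (-1)) (fun _ => 1)
  have e : ((y + (-1)) + fun i => ((1 : ℤ) : ℝ)) = y := by
    funext i; simp [Pi.add_apply]
  rw [e] at h; exact h.symm

lemma perfn_reflect {f : (Fin d → ℝ) → ℝ} (hf : PerFn f) : PerFn fun y => f (-y) := by
  intro y n
  show f (-(y + fun i => ((n i : ℤ) : ℝ))) = f (-y)
  have e : -(y + fun i => ((n i : ℤ) : ℝ)) = (-y) + fun i => (((-n) i : ℤ) : ℝ) := by
    funext i; simp [Pi.add_apply, Pi.neg_apply]; ring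
  rw [e, hf (-y) (-n)]

lemma cellMean_reflect (f : (Fin d → ℝ) → ℝ) (hf : PerFn f) :
    cellMean (fun y => f (-y)) = cellMean f := by
  unfold cellMean
  rw [← integral_indicator measurableSet_Icc, ← integral_neg_eq_self]
  have h1 : (fun y => (Set.Icc (0 : Fin d → ℝ) 1).indicator (fun z => f (-z)) (-y))
      = (Set.Icc (-1 : Fin d → ℝ) 0).indicator f := by
    funext y
    have hmem : (-y ∈ Set.Icc (0 : Fin d → ℝ) 1) ↔ y ∈ Set.Icc (-1 : Fin d → ℝ) 0 := by
      simp only [Set.mem_Icc, neg_nonneg, neg_le]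
      tauto
    by_cases h : y ∈ Set.Icc (-1 : Fin d → ℝ) 0
    · rw [Set.indicator_of_mem (hmem.mpr h), Set.indicator_of_mem h, neg_neg]
    · rw [Set.indicator_of_notMem (fun hc => h (hmem.mp hc)), Set.indicator_of_notMem h]
  rw [h1, ← integral_add_right_eq_self ((Set.Icc (-1 : Fin d → ℝ) 0).indicator f) (-1)]
  have h2 : (fun y => (Set.Icc (-1 : Fin d → ℝ) 0).indicator f (y + (-1)))
      = (Set.Icc (0 : Fin d → ℝ) 1).indicator f := by
    funext y
    have hmem : (y + (-1) ∈ Set.Icc (-1 : Fin d → ℝ) 0) ↔ y ∈ Set.Icc (0 : Fin d → ℝ) 1 := by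
      simp only [Set.mem_Icc]
      constructor
      · rintro ⟨h1', h2'⟩
        constructor
        · intro i; have := h1' i; simp [Pi.add_apply] at this ⊢; linarith
        · intro i; have := h2' i; simp [Pi.add_apply] at this ⊢; linarith
      · rintro ⟨h1', h2'⟩
        constructor
        · intro i; have := h1' i; simp [Pi.add_apply] at this ⊢; linarith
        · intro i; have := h2' i; simp [Pi.add_apply] at this ⊢; linarith
    by_cases h : y ∈ Set.Icc (0 : Fin d → ℝ) 1
    · rw [Set.indicator_of_mem (hmem.mpr h), Set.indicator_of_mem h, perfn_shift hf y]
    · rw [Set.indicator_of_notMem (fun hc => h (hmem.mp hc)), Set.indicator_of_notMem h]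
  rw [h2, integral_indicator measurableSet_Icc]

lemma cellMean_neg (f : (Fin d → ℝ) → ℝ) : cellMean (fun y => -(f y)) = -(cellMean f) := by
  unfold cellMean; exact integral_neg f

lemma Lcell_neg (D : (Fin d → ℝ) → Matrix (Fin d) (Fin d) ℝ)
    (U : (Fin d → ℝ) → (Fin d → ℝ)) (u : (Fin d → ℝ) → ℝ) (y : Fin d → ℝ) :
    Lcell D U (fun z => -u z) y = -(Lcell D U u y) := by
  have h1 : ∀ i, (fun y' => ∑ j, D y' i j * fderiv ℝ (fun z => -u z) y' (Pi.single j 1))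
      = fun y' => -(∑ j, D y' i j * fderiv ℝ u y' (Pi.single j 1)) := by
    intro i; funext y'
    simp [fderiv_neg, mul_neg, Finset.sum_neg_distrib]
  have h2 : ∀ i, (fun y' => U y' i * (-u y')) = fun y' => -(U y' i * u y') := by
    intro i; funext y'; ring
  have k1 : ∀ i, fderiv ℝ (fun y' => ∑ j, D y' i j * fderiv ℝ (fun z => -u z) y' (Pi.single j 1)) y (Pi.single i 1)
      = -(fderiv ℝ (fun y' => ∑ j, D y' i j * fderiv ℝ u y' (Pi.single j 1)) y (Pi.single i 1)) := by
    intro i; rw [h1 i, fderiv_fun_neg, ContinuousLinearMap.neg_apply]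
  have k2 : ∀ i, fderiv ℝ (fun y' => U y' i * (-u y')) y (Pi.single i 1)
      = -(fderiv ℝ (fun y' => U y' i * u y') y (Pi.single i 1)) := by
    intro i; rw [h2 i, fderiv_fun_neg, ContinuousLinearMap.neg_apply]
  simp only [Lcell]
  rw [Finset.sum_congr rfl (fun i _ => k1 i), Finset.sum_congr rfl (fun i _ => k2 i),
    Finset.sum_neg_distrib, Finset.sum_neg_distrib]
  ring

lemma Lcellstar_neg (D : (Fin d → ℝ) → Matrix (Fin d) (Fin d) ℝ)
    (U : (Fin d → ℝ) → (Fin d → ℝ)) (u : (Fin d → ℝ) → ℝ) (y : Fin d → ℝ) :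
    Lcellstar D U (fun z => -u z) y = -(Lcellstar D U u y) := by
  have h1 : ∀ i, (fun y' => ∑ j, D y' j i * fderiv ℝ (fun z => -u z) y' (Pi.single j 1))
      = fun y' => -(∑ j, D y' j i * fderiv ℝ u y' (Pi.single j 1)) := by
    intro i; funext y'
    simp [fderiv_neg, mul_neg, Finset.sum_neg_distrib]
  have k1 : ∀ i, fderiv ℝ (fun y' => ∑ j, D y' j i * fderiv ℝ (fun z => -u z) y' (Pi.single j 1)) y (Pi.single i 1)
      = -(fderiv ℝ (fun y' => ∑ j, D y' j i * fderiv ℝ u y' (Pi.single j 1)) y (Pi.single i 1)) := by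
    intro i; rw [h1 i, fderiv_fun_neg, ContinuousLinearMap.neg_apply]
  have k2 : ∀ i, U y i * fderiv ℝ (fun z => -u z) y (Pi.single i 1)
      = -(U y i * fderiv ℝ u y (Pi.single i 1)) := by
    intro i; rw [fderiv_fun_neg, ContinuousLinearMap.neg_apply]; ring
  simp only [Lcellstar]
  rw [Finset.sum_congr rfl (fun i _ => k1 i), Finset.sum_congr rfl (fun i _ => k2 i),
    Finset.sum_neg_distrib, Finset.sum_neg_distrib]
  ring

lemma Lcell_reflect (D : (Fin d → ℝ) → Matrix (Fin d) (Fin d) ℝ)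
    (U : (Fin d → ℝ) → (Fin d → ℝ))
    (hD : ∀ i j, ContDiff ℝ (⊤ : ℕ∞) fun y => D y i j) (hU : ∀ i, ContDiff ℝ (⊤ : ℕ∞) fun y => U y i)
    (hDeven : ∀ y, D (-y) = D y) (hUodd : ∀ y, U (-y) = -U y)
    (u : (Fin d → ℝ) → ℝ) (hu : ContDiff ℝ 2 u) (y : Fin d → ℝ) :
    Lcell D U (fun z => u (-z)) y = Lcell D U u (-y) := by
  have hud : Differentiable ℝ u := hu.differentiable (by norm_num)
  have hfd : ∀ w : Fin d → ℝ, ContDiff ℝ 1 (fun z => fderiv ℝ u z w) :=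
    fun w => (hu.fderiv_right (by norm_num)).clm_apply contDiff_const
  have hG : ∀ i, Differentiable ℝ (fun z => ∑ j, D z i j * fderiv ℝ u z (Pi.single j 1)) := by
    intro i
    exact (ContDiff.sum (fun j _ => ((hD i j).of_le (by simp)).mul (hfd _))).differentiable one_ne_zero
  have hH : ∀ i, Differentiable ℝ (fun z => U z i * u z) := by
    intro i
    exact (((hU i).of_le (by simp)).mul (hu.of_le (by norm_num))).differentiable one_ne_zero
  have k1 : ∀ i, fderiv ℝ (fun y' => ∑ j, D y' i j * fderiv ℝ (fun z => u (-z)) y' (Pi.single j 1)) y (Pi.single i 1)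
      = fderiv ℝ (fun y' => ∑ j, D y' i j * fderiv ℝ u y' (Pi.single j 1)) (-y) (Pi.single i 1) := by
    intro i
    have hfun : (fun y' => ∑ j, D y' i j * fderiv ℝ (fun z => u (-z)) y' (Pi.single j 1))
        = fun y' => -((fun z => ∑ j, D z i j * fderiv ℝ u z (Pi.single j 1)) (-y')) := by
      funext y'
      have ht : ∀ j, D y' i j * fderiv ℝ (fun z => u (-z)) y' (Pi.single j 1)
          = -(D (-y') i j * fderiv ℝ u (-y') (Pi.single j 1)) := by
        intro j
        rw [fderiv_comp_neg_apply' u y' _ (hud _), ← hDeven y']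
        ring
      rw [Finset.sum_congr rfl (fun j _ => ht j), Finset.sum_neg_distrib]
    rw [hfun, fderiv_neg_comp_neg_apply' _ _ _ (hG i (-y))]
  have k2 : ∀ i, fderiv ℝ (fun y' => U y' i * u (-y')) y (Pi.single i 1)
      = fderiv ℝ (fun y' => U y' i * u y') (-y) (Pi.single i 1) := by
    intro i
    have hfun : (fun y' => U y' i * u (-y')) = fun y' => -((fun z => U z i * u z) (-y')) := by
      funext y'
      have hv : U y' i = -(U (-y') i) := by
        have := congrFun (hUodd y') i
        simp at this; linarith
      rw [hv]
      show -(U (-y') i) * u (-y') = -(U (-y') i * u (-y'))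
      ring
    rw [hfun, fderiv_neg_comp_neg_apply' _ _ _ (hH i (-y))]
  simp only [Lcell]
  rw [Finset.sum_congr rfl (fun i _ => k1 i), Finset.sum_congr rfl (fun i _ => k2 i)]

lemma Lcellstar_reflect (D : (Fin d → ℝ) → Matrix (Fin d) (Fin d) ℝ)
    (U : (Fin d → ℝ) → (Fin d → ℝ))
    (hD : ∀ i j, ContDiff ℝ (⊤ : ℕ∞) fun y => D y i j)
    (hDeven : ∀ y, D (-y) = D y) (hUodd : ∀ y, U (-y) = -U y)
    (u : (Fin d → ℝ) → ℝ) (hu : ContDiff ℝ 2 u) (y : Fin d → ℝ) :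
    Lcellstar D U (fun z => u (-z)) y = Lcellstar D U u (-y) := by
  have hud : Differentiable ℝ u := hu.differentiable (by norm_num)
  have hfd : ∀ w : Fin d → ℝ, ContDiff ℝ 1 (fun z => fderiv ℝ u z w) :=
    fun w => (hu.fderiv_right (by norm_num)).clm_apply contDiff_const
  have hG : ∀ i, Differentiable ℝ (fun z => ∑ j, D z j i * fderiv ℝ u z (Pi.single j 1)) := by
    intro i
    exact (ContDiff.sum (fun j _ => ((hD j i).of_le (by simp)).mul (hfd _))).differentiable one_ne_zero
  have k1 : ∀ i, fderiv ℝ (fun y' => ∑ j, D y' j i * fderiv ℝ (fun z => u (-z)) y' (Pi.single j 1)) y (Pi.single i 1)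
      = fderiv ℝ (fun y' => ∑ j, D y' j i * fderiv ℝ u y' (Pi.single j 1)) (-y) (Pi.single i 1) := by
    intro i
    have hfun : (fun y' => ∑ j, D y' j i * fderiv ℝ (fun z => u (-z)) y' (Pi.single j 1))
        = fun y' => -((fun z => ∑ j, D z j i * fderiv ℝ u z (Pi.single j 1)) (-y')) := by
      funext y'
      have ht : ∀ j, D y' j i * fderiv ℝ (fun z => u (-z)) y' (Pi.single j 1)
          = -(D (-y') j i * fderiv ℝ u (-y') (Pi.single j 1)) := by
        intro j
        rw [fderiv_comp_neg_apply' u y' _ (hud _), ← hDeven y']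
        ring
      rw [Finset.sum_congr rfl (fun j _ => ht j), Finset.sum_neg_distrib]
    rw [hfun, fderiv_neg_comp_neg_apply' _ _ _ (hG i (-y))]
  have k2 : ∀ i, U y i * fderiv ℝ (fun z => u (-z)) y (Pi.single i 1)
      = U (-y) i * fderiv ℝ u (-y) (Pi.single i 1) := by
    intro i
    rw [fderiv_comp_neg_apply' u y _ (hud _)]
    have hv : U y i = -(U (-y) i) := by
      have := congrFun (hUodd y) i
      simp at this; linarith
    rw [hv]; ring
  simp only [Lcellstar]
  rw [Finset.sum_congr rfl (fun i _ => k1 i), Finset.sum_congr rfl (fun i _ => k2 i)]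

end ParityHelpers

/-- symmetry invariance of the pseudo-inverse of the cell
diffusion operator: if `D` is even and `U` is odd in `y`, then the normalized
kernel element `ρ` is even, and `L⁻¹` and `L*⁻¹` preserve evenness and oddness. -/
theorem cell_inverse_preserves_parity
    (D : (Fin d → ℝ) → Matrix (Fin d) (Fin d) ℝ) (U : (Fin d → ℝ) → (Fin d → ℝ))
    (hDsmooth : ∀ i j, ContDiff ℝ (⊤ : ℕ∞) fun y => D y i j)
    (hUsmooth : ∀ i, ContDiff ℝ (⊤ : ℕ∞) fun y => U y i)
    (hDper : ∀ i j, PerFn fun y => D y i j) (hUper : ∀ i, PerFn fun y => U y i)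
    (hellip : ∃ β > (0:ℝ), ∀ y (ξ : Fin d → ℝ), β * ‖ξ‖ ^ 2 ≤ ∑ i, ∑ j, D y i j * ξ i * ξ j)
    (hDeven : ∀ y, D (-y) = D y) (hUodd : ∀ y, U (-y) = -U y)
    -- the normalized kernel element of L, and its uniqueness
    (ρ : (Fin d → ℝ) → ℝ) (hρsmooth : ContDiff ℝ 2 ρ) (hρper : PerFn ρ)
    (hρker : ∀ y, Lcell D U ρ y = 0) (hρnorm : cellMean ρ = 1)
    (hρuniq : ∀ ρ' : (Fin d → ℝ) → ℝ, ContDiff ℝ 2 ρ' → PerFn ρ' →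
      (∀ y, Lcell D U ρ' y = 0) → cellMean ρ' = 1 → ρ' = ρ)
    -- the pseudo-inverse L⁻¹ and its defining properties
    (Linv : ((Fin d → ℝ) → ℝ) → ((Fin d → ℝ) → ℝ))
    (hLinv : ∀ v, Continuous v → PerFn v → cellMean v = 0 →
      ContDiff ℝ 2 (Linv v) ∧ PerFn (Linv v) ∧
        (∀ y, Lcell D U (Linv v) y = v y) ∧ cellMean (Linv v) = 0)
    (hLuniq : ∀ u₁ u₂ : (Fin d → ℝ) → ℝ, ContDiff ℝ 2 u₁ → ContDiff ℝ 2 u₂ →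
      PerFn u₁ → PerFn u₂ → (∀ y, Lcell D U u₁ y = Lcell D U u₂ y) →
      cellMean u₁ = cellMean u₂ → u₁ = u₂)
    -- the pseudo-inverse L*⁻¹ and its defining properties
    (Lsinv : ((Fin d → ℝ) → ℝ) → ((Fin d → ℝ) → ℝ))
    (hLsinv : ∀ v, Continuous v → PerFn v → cellMean (fun y => v y * ρ y) = 0 →
      ContDiff ℝ 2 (Lsinv v) ∧ PerFn (Lsinv v) ∧
        (∀ y, Lcellstar D U (Lsinv v) y = v y) ∧ cellMean (Lsinv v) = 0)
    (hLsuniq : ∀ u₁ u₂ : (Fin d → ℝ) → ℝ, ContDiff ℝ 2 u₁ → ContDiff ℝ 2 u₂ →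
      PerFn u₁ → PerFn u₂ → (∀ y, Lcellstar D U u₁ y = Lcellstar D U u₂ y) →
      cellMean u₁ = cellMean u₂ → u₁ = u₂) :
    (∀ y, ρ (-y) = ρ y) ∧
    (∀ v, Continuous v → PerFn v → cellMean v = 0 →
      ((∀ y, v (-y) = v y) → ∀ y, Linv v (-y) = Linv v y) ∧
      ((∀ y, v (-y) = -v y) → ∀ y, Linv v (-y) = -Linv v y)) ∧
    (∀ v, Continuous v → PerFn v → cellMean (fun y => v y * ρ y) = 0 →
      ((∀ y, v (-y) = v y) → ∀ y, Lsinv v (-y) = Lsinv v y) ∧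
      ((∀ y, v (-y) = -v y) → ∀ y, Lsinv v (-y) = -Lsinv v y)) := by
  refine ⟨?_, ?_, ?_⟩
  · -- ρ is even
    have hC2 : ContDiff ℝ 2 (fun z => ρ (-z)) := hρsmooth.comp contDiff_neg
    have hP : PerFn (fun z => ρ (-z)) := perfn_reflect hρper
    have hK : ∀ y, Lcell D U (fun z => ρ (-z)) y = 0 := fun y => by
      rw [Lcell_reflect D U hDsmooth hUsmooth hDeven hUodd ρ hρsmooth y]; exact hρker (-y)
    have hM : cellMean (fun z => ρ (-z)) = 1 := by rw [cellMean_reflect ρ hρper, hρnorm]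
    have h := hρuniq _ hC2 hP hK hM
    intro y; exact congrFun h y
  · -- L⁻¹ preserves parity
    intro v hv hvper hvmean
    obtain ⟨hC2, hP, hEq, hM⟩ := hLinv v hv hvper hvmean
    constructor
    · intro hveven
      have hrC : ContDiff ℝ 2 (fun z => Linv v (-z)) := hC2.comp contDiff_neg
      have hrP : PerFn (fun z => Linv v (-z)) := perfn_reflect hP
      have heq : ∀ y, Lcell D U (fun z => Linv v (-z)) y = Lcell D U (Linv v) y := by
        intro y
        rw [Lcell_reflect D U hDsmooth hUsmooth hDeven hUodd _ hC2 y, hEq (-y), hveven y,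
          hEq y]
      have hm : cellMean (fun z => Linv v (-z)) = cellMean (Linv v) := cellMean_reflect _ hP
      have h := hLuniq _ _ hrC hC2 hrP hP heq hm
      intro y; exact congrFun h y
    · intro hvodd
      have hrC : ContDiff ℝ 2 (fun z => -(Linv v (-z))) := (hC2.comp contDiff_neg).neg
      have hrP : PerFn (fun z => -(Linv v (-z))) := fun y n =>
        congrArg Neg.neg (perfn_reflect hP y n)
      have heq : ∀ y, Lcell D U (fun z => -(Linv v (-z))) y = Lcell D U (Linv v) y := by
        intro y
        have e1 := Lcell_neg D U (fun z => Linv v (-z)) y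
        rw [e1, Lcell_reflect D U hDsmooth hUsmooth hDeven hUodd _ hC2 y, hEq (-y),
          hvodd y, neg_neg, hEq y]
      have hm : cellMean (fun z => -(Linv v (-z))) = cellMean (Linv v) := by
        rw [cellMean_neg, cellMean_reflect _ hP, hM, neg_zero]
      have h := hLuniq _ _ hrC hC2 hrP hP heq hm
      intro y
      have h2 := congrFun h y
      linarith
  · -- L*⁻¹ preserves parity
    intro v hv hvper hvmean
    obtain ⟨hC2, hP, hEq, hM⟩ := hLsinv v hv hvper hvmean
    constructor
    · intro hveven
      have hrC : ContDiff ℝ 2 (fun z => Lsinv v (-z)) := hC2.comp contDiff_neg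
      have hrP : PerFn (fun z => Lsinv v (-z)) := perfn_reflect hP
      have heq : ∀ y, Lcellstar D U (fun z => Lsinv v (-z)) y = Lcellstar D U (Lsinv v) y := by
        intro y
        rw [Lcellstar_reflect D U hDsmooth hDeven hUodd _ hC2 y, hEq (-y), hveven y, hEq y]
      have hm : cellMean (fun z => Lsinv v (-z)) = cellMean (Lsinv v) := cellMean_reflect _ hP
      have h := hLsuniq _ _ hrC hC2 hrP hP heq hm
      intro y; exact congrFun h y
    · intro hvodd
      have hrC : ContDiff ℝ 2 (fun z => -(Lsinv v (-z))) := (hC2.comp contDiff_neg).neg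
      have hrP : PerFn (fun z => -(Lsinv v (-z))) := fun y n =>
        congrArg Neg.neg (perfn_reflect hP y n)
      have heq : ∀ y, Lcellstar D U (fun z => -(Lsinv v (-z))) y = Lcellstar D U (Lsinv v) y := by
        intro y
        have e1 := Lcellstar_neg D U (fun z => Lsinv v (-z)) y
        rw [e1, Lcellstar_reflect D U hDsmooth hDeven hUodd _ hC2 y, hEq (-y),
          hvodd y, neg_neg, hEq y]
      have hm : cellMean (fun z => -(Lsinv v (-z))) = cellMean (Lsinv v) := by
        rw [cellMean_neg, cellMean_reflect _ hP, hM, neg_zero]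
      have h := hLsuniq _ _ hrC hC2 hrP hP heq hm
      intro y
      have h2 := congrFun h y
      linarith
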